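/- arXiv:2108.12619 — 7 statements merged into one kernel-verified Lean document; each statement's English description precedes it below -/
import Mathlib

section
/- Let U ⊆ ℝ² be open and let ρ, u, v, p, S : U → ℝ be differentiable functions satisfying the two-dimensional stationary gas dynamics system on U. Let β₁, β₂, β₃, β₄ ∈ ℝ with β₁ ≠ 0, and suppose that at every point of U both p + β₂ ≠ 0 and p + β₂ + ρ(u² + v²) ≠ 0. Let F : ℝ → ℝ be differentiable. Suppose Φ = (X, Y) : U → ℝ² is a differentiable map whose partial derivatives satisfy at every point of U: X_x = β₁⁻¹(p + β₂ + ρv²), X_y = −β₁⁻¹ρuv, Y_x = −β₁⁻¹ρuv, Y_y = β₁⁻¹(p + β₂ + ρu²), and suppose Φ is injective with open image V and differentiable inverse Ψ : V → U. Define on V the functions ρ' = (β₃ρ(p+β₂)/(p+β₂+ρ(u²+v²))) ∘ Ψ, u' = (β₁u/(p+β₂)) ∘ Ψ, v' = (β₁v/(p+β₂)) ∘ Ψ, p' = (β₄ − β₁²β₃/(p+β₂)) ∘ Ψ, S' = F ∘ S ∘ Ψ. Then ρ', u', v', p', S' satisfy the two-dimensional stationary gas dynamics system at every point of V. -/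
/-- Partial derivative with respect to `x` of a function on `ℝ × ℝ`. -/
noncomputable def pdx (f : ℝ × ℝ → ℝ) (z : ℝ × ℝ) : ℝ := fderiv ℝ f z (1, 0)

/-- Partial derivative with respect to `y` of a function on `ℝ × ℝ`. -/
noncomputable def pdy (f : ℝ × ℝ → ℝ) (z : ℝ × ℝ) : ℝ := fderiv ℝ f z (0, 1)

/-- The two-dimensional stationary gas dynamics system on a set `U`. -/
def GasSystem (U : Set (ℝ × ℝ)) (ρ u v p S : ℝ × ℝ → ℝ) : Prop :=
  ∀ z ∈ U,
    pdx (fun w => ρ w * u w) z + pdy (fun w => ρ w * v w) z = 0 ∧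
    ρ z * (u z * pdx u z + v z * pdy u z) + pdx p z = 0 ∧
    ρ z * (u z * pdx v z + v z * pdy v z) + pdy p z = 0 ∧
    u z * pdx S z + v z * pdy S z = 0

section helpers
variable {f g : ℝ × ℝ → ℝ} {z e : ℝ × ℝ} {c : ℝ}

lemma pd_apply (f : ℝ × ℝ → ℝ) (z : ℝ × ℝ) (s t : ℝ) :
    fderiv ℝ f z (s, t) = s * fderiv ℝ f z (1, 0) + t * fderiv ℝ f z (0, 1) := by
  have h : (s, t) = s • ((1:ℝ), (0:ℝ)) + t • ((0:ℝ), (1:ℝ)) := by simp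
  rw [h, map_add, map_smul, map_smul]; simp

lemma pd_add (hf : DifferentiableAt ℝ f z) (hg : DifferentiableAt ℝ g z) :
    fderiv ℝ (fun y => f y + g y) z e = fderiv ℝ f z e + fderiv ℝ g z e := by
  rw [fderiv_fun_add hf hg]; rfl

lemma pd_add_const :
    fderiv ℝ (fun y => f y + c) z e = fderiv ℝ f z e := by
  rw [fderiv_add_const]

lemma pd_const_sub :
    fderiv ℝ (fun y => c - f y) z e = -fderiv ℝ f z e := by
  rw [fderiv_const_sub c]; rfl

lemma pd_mul (hf : DifferentiableAt ℝ f z) (hg : DifferentiableAt ℝ g z) :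
    fderiv ℝ (fun y => f y * g y) z e = f z * fderiv ℝ g z e + g z * fderiv ℝ f z e := by
  rw [fderiv_fun_mul hf hg]; simp

lemma pd_const_mul (hf : DifferentiableAt ℝ f z) :
    fderiv ℝ (fun y => c * f y) z e = c * fderiv ℝ f z e := by
  rw [fderiv_const_mul hf]; simp

lemma pd_inv (hg : DifferentiableAt ℝ g z) (hgz : g z ≠ 0) :
    fderiv ℝ (fun y => (g y)⁻¹) z e = -(fderiv ℝ g z e) / g z ^ 2 := by
  rw [show (fun y => (g y)⁻¹) = Inv.inv ∘ g from rfl,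
    fderiv_comp z (differentiableAt_inv hgz) hg, fderiv_inv' hgz]
  simp only [ContinuousLinearMap.comp_apply, ContinuousLinearMap.neg_apply,
    ContinuousLinearMap.mulLeftRight_apply]
  field_simp

lemma diffDiv (hf : DifferentiableAt ℝ f z) (hg : DifferentiableAt ℝ g z) (hgz : g z ≠ 0) :
    DifferentiableAt ℝ (fun y => f y / g y) z := by
  have h : (fun y => f y / g y) = fun y => f y * (g y)⁻¹ := by
    ext y; rw [div_eq_mul_inv]
  rw [h]
  exact hf.mul (hg.inv hgz)

lemma pd_div (hf : DifferentiableAt ℝ f z) (hg : DifferentiableAt ℝ g z) (hgz : g z ≠ 0) :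
    fderiv ℝ (fun y => f y / g y) z e =
      (g z * fderiv ℝ f z e - f z * fderiv ℝ g z e) / g z ^ 2 := by
  simp only [div_eq_mul_inv]
  rw [pd_mul (g := fun y => (g y)⁻¹) hf (hg.inv hgz), pd_inv hg hgz]
  field_simp
  ring

lemma pd_sq (hf : DifferentiableAt ℝ f z) :
    fderiv ℝ (fun y => f y ^ 2) z e = 2 * f z * fderiv ℝ f z e := by
  have h : (fun y => f y ^ 2) = fun y => f y * f y := by ext y; ring
  rw [h, pd_mul hf hf]; ring

lemma pd_comp (F : ℝ → ℝ) (hF : DifferentiableAt ℝ F (f z)) (hf : DifferentiableAt ℝ f z) :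
    fderiv ℝ (fun y => F (f y)) z e = deriv F (f z) * fderiv ℝ f z e := by
  rw [show (fun y => F (f y)) = F ∘ f from rfl, fderiv_comp z hF hf]
  simp only [ContinuousLinearMap.comp_apply]
  rw [show fderiv ℝ f z e = (fderiv ℝ f z e) • (1:ℝ) by simp, map_smul]
  simp [fderiv_apply_one_eq_deriv]
  ring

end helpers

set_option maxHeartbeats 4000000 in
/-- The Bateman-type reciprocal transformations of Power and Smith map solutions
of the two-dimensional stationary gas dynamics system to solutions. -/
theorem bateman_reciprocal_transformation
    (U : Set (ℝ × ℝ)) (hU : IsOpen U) (ρ u v p S : ℝ × ℝ → ℝ)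
    (hρ : ∀ z ∈ U, DifferentiableAt ℝ ρ z)
    (hu : ∀ z ∈ U, DifferentiableAt ℝ u z)
    (hv : ∀ z ∈ U, DifferentiableAt ℝ v z)
    (hp : ∀ z ∈ U, DifferentiableAt ℝ p z)
    (hS : ∀ z ∈ U, DifferentiableAt ℝ S z)
    (hsys : GasSystem U ρ u v p S)
    (β₁ β₂ β₃ β₄ : ℝ) (hβ₁ : β₁ ≠ 0)
    (hpβ : ∀ z ∈ U, p z + β₂ ≠ 0)
    (hpq : ∀ z ∈ U, p z + β₂ + ρ z * (u z ^ 2 + v z ^ 2) ≠ 0)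
    (F : ℝ → ℝ) (hF : Differentiable ℝ F)
    (Φ : ℝ × ℝ → ℝ × ℝ)
    (hΦdiff : ∀ z ∈ U, DifferentiableAt ℝ Φ z)
    (hΦx : ∀ z ∈ U, fderiv ℝ Φ z (1, 0) =
      (β₁⁻¹ * (p z + β₂ + ρ z * v z ^ 2), -(β₁⁻¹ * (ρ z * u z * v z))))
    (hΦy : ∀ z ∈ U, fderiv ℝ Φ z (0, 1) =
      (-(β₁⁻¹ * (ρ z * u z * v z)), β₁⁻¹ * (p z + β₂ + ρ z * u z ^ 2)))
    (hΦinj : Set.InjOn Φ U)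
    (hV : IsOpen (Φ '' U))
    (Ψ : ℝ × ℝ → ℝ × ℝ)
    (hΨdiff : ∀ w ∈ Φ '' U, DifferentiableAt ℝ Ψ w)
    (hΨmaps : ∀ w ∈ Φ '' U, Ψ w ∈ U)
    (hΨΦ : ∀ z ∈ U, Ψ (Φ z) = z)
    (hΦΨ : ∀ w ∈ Φ '' U, Φ (Ψ w) = w) :
    GasSystem (Φ '' U)
      (fun w => β₃ * ρ (Ψ w) * (p (Ψ w) + β₂) /
        (p (Ψ w) + β₂ + ρ (Ψ w) * (u (Ψ w) ^ 2 + v (Ψ w) ^ 2)))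
      (fun w => β₁ * u (Ψ w) / (p (Ψ w) + β₂))
      (fun w => β₁ * v (Ψ w) / (p (Ψ w) + β₂))
      (fun w => β₄ - β₁ ^ 2 * β₃ / (p (Ψ w) + β₂))
      (fun w => F (S (Ψ w))) := by
  intro w hw
  obtain ⟨z, hz, rfl⟩ := hw
  have hzΨ : Ψ (Φ z) = z := hΨΦ z hz
  have hPz : p z + β₂ ≠ 0 := hpβ z hz
  have hEz : p z + β₂ + ρ z * (u z ^ 2 + v z ^ 2) ≠ 0 := hpq z hz
  have dρ := hρ z hz
  have du := hu z hz
  have dv := hv z hz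
  have dp := hp z hz
  have dS := hS z hz
  have dΦ : DifferentiableAt ℝ Φ z := hΦdiff z hz
  have dΨ : DifferentiableAt ℝ Ψ (Φ z) := hΨdiff _ (Set.mem_image_of_mem Φ hz)
  -- the inverse Jacobian
  have h4 := fderiv_comp z dΨ dΦ
  have h2 : (fun x => Ψ (Φ x)) =ᶠ[nhds z] id := by
    filter_upwards [hU.mem_nhds hz] with x hx using hΨΦ x hx
  have h3 : fderiv ℝ (fun x => Ψ (Φ x)) z = fderiv ℝ (id : ℝ × ℝ → ℝ × ℝ) z := h2.fderiv_eq
  rw [show (Ψ ∘ Φ) = (fun x => Ψ (Φ x)) from rfl, h3, fderiv_id] at h4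
  have hcomp : ∀ y₀ : ℝ × ℝ, fderiv ℝ Ψ (Φ z) (fderiv ℝ Φ z y₀) = y₀ := by
    intro y₀
    calc fderiv ℝ Ψ (Φ z) (fderiv ℝ Φ z y₀)
        = ((fderiv ℝ Ψ (Φ z)).comp (fderiv ℝ Φ z)) y₀ := rfl
      _ = (ContinuousLinearMap.id ℝ (ℝ × ℝ)) y₀ := by rw [← h4]
      _ = y₀ := rfl
  have hJ1 : fderiv ℝ Ψ (Φ z) (1, 0) = (β₁ * (p z + β₂ + ρ z * u z ^ 2) / ((p z + β₂) * (p z + β₂ + ρ z * (u z ^ 2 + v z ^ 2))), β₁ * (ρ z * u z * v z) / ((p z + β₂) * (p z + β₂ + ρ z * (u z ^ 2 + v z ^ 2)))) := by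
    have he : ((1:ℝ), (0:ℝ)) = (β₁ * (p z + β₂ + ρ z * u z ^ 2) / ((p z + β₂) * (p z + β₂ + ρ z * (u z ^ 2 + v z ^ 2)))) • (fderiv ℝ Φ z (1, 0)) +
        (β₁ * (ρ z * u z * v z) / ((p z + β₂) * (p z + β₂ + ρ z * (u z ^ 2 + v z ^ 2)))) • (fderiv ℝ Φ z (0, 1)) := by
      rw [hΦx z hz, hΦy z hz]
      simp only [Prod.smul_mk, Prod.mk_add_mk, smul_eq_mul, Prod.mk.injEq]
      constructor
      · field_simp
        ring
      · field_simp
        ring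
    calc fderiv ℝ Ψ (Φ z) (1, 0)
        = fderiv ℝ Ψ (Φ z) ((β₁ * (p z + β₂ + ρ z * u z ^ 2) / ((p z + β₂) * (p z + β₂ + ρ z * (u z ^ 2 + v z ^ 2)))) • (fderiv ℝ Φ z (1, 0)) +
            (β₁ * (ρ z * u z * v z) / ((p z + β₂) * (p z + β₂ + ρ z * (u z ^ 2 + v z ^ 2)))) • (fderiv ℝ Φ z (0, 1))) := by rw [← he]
      _ = (β₁ * (p z + β₂ + ρ z * u z ^ 2) / ((p z + β₂) * (p z + β₂ + ρ z * (u z ^ 2 + v z ^ 2)))) • (fderiv ℝ Ψ (Φ z) (fderiv ℝ Φ z (1, 0))) +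
            (β₁ * (ρ z * u z * v z) / ((p z + β₂) * (p z + β₂ + ρ z * (u z ^ 2 + v z ^ 2)))) • (fderiv ℝ Ψ (Φ z) (fderiv ℝ Φ z (0, 1))) := by
          rw [map_add, map_smul, map_smul]
      _ = (β₁ * (p z + β₂ + ρ z * u z ^ 2) / ((p z + β₂) * (p z + β₂ + ρ z * (u z ^ 2 + v z ^ 2)))) • ((1:ℝ), (0:ℝ)) + (β₁ * (ρ z * u z * v z) / ((p z + β₂) * (p z + β₂ + ρ z * (u z ^ 2 + v z ^ 2)))) • ((0:ℝ), (1:ℝ)) := by rw [hcomp, hcomp]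
      _ = (β₁ * (p z + β₂ + ρ z * u z ^ 2) / ((p z + β₂) * (p z + β₂ + ρ z * (u z ^ 2 + v z ^ 2))), β₁ * (ρ z * u z * v z) / ((p z + β₂) * (p z + β₂ + ρ z * (u z ^ 2 + v z ^ 2)))) := by simp
  have hJ2 : fderiv ℝ Ψ (Φ z) (0, 1) = (β₁ * (ρ z * u z * v z) / ((p z + β₂) * (p z + β₂ + ρ z * (u z ^ 2 + v z ^ 2))), β₁ * (p z + β₂ + ρ z * v z ^ 2) / ((p z + β₂) * (p z + β₂ + ρ z * (u z ^ 2 + v z ^ 2)))) := by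
    have he : ((0:ℝ), (1:ℝ)) = (β₁ * (ρ z * u z * v z) / ((p z + β₂) * (p z + β₂ + ρ z * (u z ^ 2 + v z ^ 2)))) • (fderiv ℝ Φ z (1, 0)) +
        (β₁ * (p z + β₂ + ρ z * v z ^ 2) / ((p z + β₂) * (p z + β₂ + ρ z * (u z ^ 2 + v z ^ 2)))) • (fderiv ℝ Φ z (0, 1)) := by
      rw [hΦx z hz, hΦy z hz]
      simp only [Prod.smul_mk, Prod.mk_add_mk, smul_eq_mul, Prod.mk.injEq]
      constructor
      · field_simp
        ring
      · field_simp
        ring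
    calc fderiv ℝ Ψ (Φ z) (0, 1)
        = fderiv ℝ Ψ (Φ z) ((β₁ * (ρ z * u z * v z) / ((p z + β₂) * (p z + β₂ + ρ z * (u z ^ 2 + v z ^ 2)))) • (fderiv ℝ Φ z (1, 0)) +
            (β₁ * (p z + β₂ + ρ z * v z ^ 2) / ((p z + β₂) * (p z + β₂ + ρ z * (u z ^ 2 + v z ^ 2)))) • (fderiv ℝ Φ z (0, 1))) := by rw [← he]
      _ = (β₁ * (ρ z * u z * v z) / ((p z + β₂) * (p z + β₂ + ρ z * (u z ^ 2 + v z ^ 2)))) • (fderiv ℝ Ψ (Φ z) (fderiv ℝ Φ z (1, 0))) +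
            (β₁ * (p z + β₂ + ρ z * v z ^ 2) / ((p z + β₂) * (p z + β₂ + ρ z * (u z ^ 2 + v z ^ 2)))) • (fderiv ℝ Ψ (Φ z) (fderiv ℝ Φ z (0, 1))) := by
          rw [map_add, map_smul, map_smul]
      _ = (β₁ * (ρ z * u z * v z) / ((p z + β₂) * (p z + β₂ + ρ z * (u z ^ 2 + v z ^ 2)))) • ((1:ℝ), (0:ℝ)) + (β₁ * (p z + β₂ + ρ z * v z ^ 2) / ((p z + β₂) * (p z + β₂ + ρ z * (u z ^ 2 + v z ^ 2)))) • ((0:ℝ), (1:ℝ)) := by rw [hcomp, hcomp]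
      _ = (β₁ * (ρ z * u z * v z) / ((p z + β₂) * (p z + β₂ + ρ z * (u z ^ 2 + v z ^ 2))), β₁ * (p z + β₂ + ρ z * v z ^ 2) / ((p z + β₂) * (p z + β₂ + ρ z * (u z ^ 2 + v z ^ 2)))) := by simp
  -- the chain rule
  have keyx : ∀ f : ℝ × ℝ → ℝ, DifferentiableAt ℝ f z →
      fderiv ℝ (fun w => f (Ψ w)) (Φ z) (1, 0) =
        β₁ * (p z + β₂ + ρ z * u z ^ 2) / ((p z + β₂) * (p z + β₂ + ρ z * (u z ^ 2 + v z ^ 2))) * fderiv ℝ f z (1, 0) + β₁ * (ρ z * u z * v z) / ((p z + β₂) * (p z + β₂ + ρ z * (u z ^ 2 + v z ^ 2))) * fderiv ℝ f z (0, 1) := by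
    intro f hf
    have hfz : DifferentiableAt ℝ f (Ψ (Φ z)) := by rw [hzΨ]; exact hf
    have hc : fderiv ℝ (fun w => f (Ψ w)) (Φ z) =
        (fderiv ℝ f (Ψ (Φ z))).comp (fderiv ℝ Ψ (Φ z)) := fderiv_comp (Φ z) hfz dΨ
    rw [hc, ContinuousLinearMap.comp_apply, hJ1, hzΨ, pd_apply]
  have keyy : ∀ f : ℝ × ℝ → ℝ, DifferentiableAt ℝ f z →
      fderiv ℝ (fun w => f (Ψ w)) (Φ z) (0, 1) =
        β₁ * (ρ z * u z * v z) / ((p z + β₂) * (p z + β₂ + ρ z * (u z ^ 2 + v z ^ 2))) * fderiv ℝ f z (1, 0) + β₁ * (p z + β₂ + ρ z * v z ^ 2) / ((p z + β₂) * (p z + β₂ + ρ z * (u z ^ 2 + v z ^ 2))) * fderiv ℝ f z (0, 1) := by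
    intro f hf
    have hfz : DifferentiableAt ℝ f (Ψ (Φ z)) := by rw [hzΨ]; exact hf
    have hc : fderiv ℝ (fun w => f (Ψ w)) (Φ z) =
        (fderiv ℝ f (Ψ (Φ z))).comp (fderiv ℝ Ψ (Φ z)) := fderiv_comp (Φ z) hfz dΨ
    rw [hc, ContinuousLinearMap.comp_apply, hJ2, hzΨ, pd_apply]
  -- differentiability of the building blocks
  have dP : DifferentiableAt ℝ (fun y => p y + β₂) z := dp.add_const β₂
  have dQ : DifferentiableAt ℝ (fun y => u y ^ 2 + v y ^ 2) z := (du.pow 2).add (dv.pow 2)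
  have dE : DifferentiableAt ℝ (fun y => p y + β₂ + ρ y * (u y ^ 2 + v y ^ 2)) z :=
    dP.add (dρ.mul dQ)
  have dnum : DifferentiableAt ℝ (fun y => β₃ * ρ y * (p y + β₂)) z :=
    (dρ.const_mul β₃).mul dP
  have drho : DifferentiableAt ℝ (fun y => β₃ * ρ y * (p y + β₂) / (p y + β₂ + ρ y * (u y ^ 2 + v y ^ 2))) z := diffDiv dnum dE hEz
  have df1d : DifferentiableAt ℝ (fun y => β₁ * u y / (p y + β₂)) z := diffDiv (du.const_mul β₁) dP hPz
  have df2d : DifferentiableAt ℝ (fun y => β₁ * v y / (p y + β₂)) z := diffDiv (dv.const_mul β₁) dP hPz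
  have df3d : DifferentiableAt ℝ (fun y => β₄ - β₁ ^ 2 * β₃ / (p y + β₂)) z :=
    (differentiableAt_const β₄).sub (diffDiv (differentiableAt_const (β₁ ^ 2 * β₃)) dP hPz)
  have dG1 : DifferentiableAt ℝ (fun y => β₃ * ρ y * (p y + β₂) / (p y + β₂ + ρ y * (u y ^ 2 + v y ^ 2)) * (β₁ * u y / (p y + β₂))) z := drho.mul df1d
  have dG2 : DifferentiableAt ℝ (fun y => β₃ * ρ y * (p y + β₂) / (p y + β₂ + ρ y * (u y ^ 2 + v y ^ 2)) * (β₁ * v y / (p y + β₂))) z := drho.mul df2d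
  have dFS : DifferentiableAt ℝ (fun y => F (S y)) z := DifferentiableAt.comp z (hF (S z)) dS
  -- derivatives of the building blocks
  have hdf1 : ∀ e : ℝ × ℝ, fderiv ℝ (fun y => β₁ * u y / (p y + β₂)) z e = ((p z + β₂) * (β₁ * fderiv ℝ u z e) - β₁ * u z * fderiv ℝ p z e) / (p z + β₂) ^ 2 := by
    intro e
    rw [pd_div (du.const_mul β₁) dP hPz, pd_const_mul du, pd_add_const]
  have hdf2 : ∀ e : ℝ × ℝ, fderiv ℝ (fun y => β₁ * v y / (p y + β₂)) z e = ((p z + β₂) * (β₁ * fderiv ℝ v z e) - β₁ * v z * fderiv ℝ p z e) / (p z + β₂) ^ 2 := by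
    intro e
    rw [pd_div (dv.const_mul β₁) dP hPz, pd_const_mul dv, pd_add_const]
  have hdf3 : ∀ e : ℝ × ℝ, fderiv ℝ (fun y => β₄ - β₁ ^ 2 * β₃ / (p y + β₂)) z e = β₁ ^ 2 * β₃ * fderiv ℝ p z e / (p z + β₂) ^ 2 := by
    intro e
    rw [pd_const_sub, pd_div (differentiableAt_const (β₁ ^ 2 * β₃)) dP hPz, pd_add_const,
      fderiv_fun_const]
    simp only [Pi.zero_apply, ContinuousLinearMap.zero_apply]
    ring
  have hdE : ∀ e : ℝ × ℝ, fderiv ℝ (fun y => p y + β₂ + ρ y * (u y ^ 2 + v y ^ 2)) z e =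
      fderiv ℝ p z e + (ρ z * (2 * u z * fderiv ℝ u z e + 2 * v z * fderiv ℝ v z e) + (u z ^ 2 + v z ^ 2) * fderiv ℝ ρ z e) := by
    intro e
    rw [pd_add (g := fun y => ρ y * (u y ^ 2 + v y ^ 2)) dP (dρ.mul dQ), pd_add_const, pd_mul dρ dQ, pd_add (f := fun y => u y ^ 2) (g := fun y => v y ^ 2) (du.pow 2) (dv.pow 2),
      pd_sq du, pd_sq dv]
  have hdnum : ∀ e : ℝ × ℝ, fderiv ℝ (fun y => β₃ * ρ y * (p y + β₂)) z e = β₃ * ρ z * fderiv ℝ p z e + (p z + β₂) * (β₃ * fderiv ℝ ρ z e) := by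
    intro e
    rw [pd_mul (dρ.const_mul β₃) dP, pd_const_mul dρ, pd_add_const]
  have hdrho : ∀ e : ℝ × ℝ, fderiv ℝ (fun y => β₃ * ρ y * (p y + β₂) / (p y + β₂ + ρ y * (u y ^ 2 + v y ^ 2))) z e = ((p z + β₂ + ρ z * (u z ^ 2 + v z ^ 2)) * (β₃ * ρ z * fderiv ℝ p z e + (p z + β₂) * (β₃ * fderiv ℝ ρ z e)) - β₃ * ρ z * (p z + β₂) * (fderiv ℝ p z e + (ρ z * (2 * u z * fderiv ℝ u z e + 2 * v z * fderiv ℝ v z e) + (u z ^ 2 + v z ^ 2) * fderiv ℝ ρ z e))) / (p z + β₂ + ρ z * (u z ^ 2 + v z ^ 2)) ^ 2 := by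
    intro e
    rw [pd_div dnum dE hEz, hdnum, hdE]
  have hdG1 : ∀ e : ℝ × ℝ, fderiv ℝ (fun y => β₃ * ρ y * (p y + β₂) / (p y + β₂ + ρ y * (u y ^ 2 + v y ^ 2)) * (β₁ * u y / (p y + β₂))) z e =
      β₃ * ρ z * (p z + β₂) / (p z + β₂ + ρ z * (u z ^ 2 + v z ^ 2)) * (((p z + β₂) * (β₁ * fderiv ℝ u z e) - β₁ * u z * fderiv ℝ p z e) / (p z + β₂) ^ 2) + β₁ * u z / (p z + β₂) * (((p z + β₂ + ρ z * (u z ^ 2 + v z ^ 2)) * (β₃ * ρ z * fderiv ℝ p z e + (p z + β₂) * (β₃ * fderiv ℝ ρ z e)) - β₃ * ρ z * (p z + β₂) * (fderiv ℝ p z e + (ρ z * (2 * u z * fderiv ℝ u z e + 2 * v z * fderiv ℝ v z e) + (u z ^ 2 + v z ^ 2) * fderiv ℝ ρ z e))) / (p z + β₂ + ρ z * (u z ^ 2 + v z ^ 2)) ^ 2) := by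
    intro e
    rw [pd_mul drho df1d, hdrho, hdf1]
  have hdG2 : ∀ e : ℝ × ℝ, fderiv ℝ (fun y => β₃ * ρ y * (p y + β₂) / (p y + β₂ + ρ y * (u y ^ 2 + v y ^ 2)) * (β₁ * v y / (p y + β₂))) z e =
      β₃ * ρ z * (p z + β₂) / (p z + β₂ + ρ z * (u z ^ 2 + v z ^ 2)) * (((p z + β₂) * (β₁ * fderiv ℝ v z e) - β₁ * v z * fderiv ℝ p z e) / (p z + β₂) ^ 2) + β₁ * v z / (p z + β₂) * (((p z + β₂ + ρ z * (u z ^ 2 + v z ^ 2)) * (β₃ * ρ z * fderiv ℝ p z e + (p z + β₂) * (β₃ * fderiv ℝ ρ z e)) - β₃ * ρ z * (p z + β₂) * (fderiv ℝ p z e + (ρ z * (2 * u z * fderiv ℝ u z e + 2 * v z * fderiv ℝ v z e) + (u z ^ 2 + v z ^ 2) * fderiv ℝ ρ z e))) / (p z + β₂ + ρ z * (u z ^ 2 + v z ^ 2)) ^ 2) := by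
    intro e
    rw [pd_mul drho df2d, hdrho, hdf2]
  have hdFS : ∀ e : ℝ × ℝ, fderiv ℝ (fun y => F (S y)) z e = deriv F (S z) * fderiv ℝ S z e :=
    fun e => pd_comp F (hF (S z)) dS
  -- the original system at z
  obtain ⟨e1, e2, e3, e4⟩ := hsys z hz
  simp only [pdx, pdy] at e1 e2 e3 e4
  rw [pd_mul dρ du, pd_mul dρ dv] at e1
  refine ⟨?_, ?_, ?_, ?_⟩
  · -- continuity equation
    simp only [pdx, pdy, hzΨ]
    have h1x : fderiv ℝ (fun w => β₃ * ρ (Ψ w) * (p (Ψ w) + β₂) / (p (Ψ w) + β₂ + ρ (Ψ w) * (u (Ψ w) ^ 2 + v (Ψ w) ^ 2)) * (β₁ * u (Ψ w) / (p (Ψ w) + β₂))) (Φ z) (1, 0) =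
        β₁ * (p z + β₂ + ρ z * u z ^ 2) / ((p z + β₂) * (p z + β₂ + ρ z * (u z ^ 2 + v z ^ 2))) * fderiv ℝ (fun y => β₃ * ρ y * (p y + β₂) / (p y + β₂ + ρ y * (u y ^ 2 + v y ^ 2)) * (β₁ * u y / (p y + β₂))) z (1, 0) +
        β₁ * (ρ z * u z * v z) / ((p z + β₂) * (p z + β₂ + ρ z * (u z ^ 2 + v z ^ 2))) * fderiv ℝ (fun y => β₃ * ρ y * (p y + β₂) / (p y + β₂ + ρ y * (u y ^ 2 + v y ^ 2)) * (β₁ * u y / (p y + β₂))) z (0, 1) :=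
      keyx _ dG1
    have h1y : fderiv ℝ (fun w => β₃ * ρ (Ψ w) * (p (Ψ w) + β₂) / (p (Ψ w) + β₂ + ρ (Ψ w) * (u (Ψ w) ^ 2 + v (Ψ w) ^ 2)) * (β₁ * v (Ψ w) / (p (Ψ w) + β₂))) (Φ z) (0, 1) =
        β₁ * (ρ z * u z * v z) / ((p z + β₂) * (p z + β₂ + ρ z * (u z ^ 2 + v z ^ 2))) * fderiv ℝ (fun y => β₃ * ρ y * (p y + β₂) / (p y + β₂ + ρ y * (u y ^ 2 + v y ^ 2)) * (β₁ * v y / (p y + β₂))) z (1, 0) +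
        β₁ * (p z + β₂ + ρ z * v z ^ 2) / ((p z + β₂) * (p z + β₂ + ρ z * (u z ^ 2 + v z ^ 2))) * fderiv ℝ (fun y => β₃ * ρ y * (p y + β₂) / (p y + β₂ + ρ y * (u y ^ 2 + v y ^ 2)) * (β₁ * v y / (p y + β₂))) z (0, 1) :=
      keyy _ dG2
    rw [h1x, h1y]
    simp only [hdG1, hdG2]
    have hfac : β₁ * (p z + β₂ + ρ z * u z ^ 2) / ((p z + β₂) * (p z + β₂ + ρ z * (u z ^ 2 + v z ^ 2))) * (β₃ * ρ z * (p z + β₂) / (p z + β₂ + ρ z * (u z ^ 2 + v z ^ 2)) * (((p z + β₂) * (β₁ * fderiv ℝ u z (1, 0)) - β₁ * u z * fderiv ℝ p z (1, 0)) / (p z + β₂) ^ 2) + β₁ * u z / (p z + β₂) * (((p z + β₂ + ρ z * (u z ^ 2 + v z ^ 2)) * (β₃ * ρ z * fderiv ℝ p z (1, 0) + (p z + β₂) * (β₃ * fderiv ℝ ρ z (1, 0))) - β₃ * ρ z * (p z + β₂) * (fderiv ℝ p z (1, 0) + (ρ z * (2 * u z * fderiv ℝ u z (1, 0) + 2 *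 v z * fderiv ℝ v z (1, 0)) + (u z ^ 2 + v z ^ 2) * fderiv ℝ ρ z (1, 0)))) / (p z + β₂ + ρ z * (u z ^ 2 + v z ^ 2)) ^ 2)) + β₁ * (ρ z * u z * v z) / ((p z + β₂) * (p z + β₂ + ρ z * (u z ^ 2 + v z ^ 2))) * (β₃ * ρ z * (p z + β₂) / (p z + β₂ + ρ z * (u z ^ 2 + v z ^ 2)) * (((p z + β₂) * (β₁ * fderiv ℝ u z (0, 1)) - β₁ * u z * fderiv ℝ p z (0, 1)) / (p z + β₂) ^ 2) + β₁ * u z / (p z + β₂) * (((p z + β₂ + ρ z * (u z ^ 2 + v z ^ 2)) * (β₃ * ρ z * fderiv ℝ p z (0, 1) + (p z + β₂) * (β₃ * fderiv ℝ ρ z (0, 1))) - β₃ * ρ z * (p z + β₂) * (fderiv ℝ p z (0, 1) + (ρ z * (2 * u z * fderiv ℝ u z (0, 1) + 2 * v z * fderiv ℝ v z (0, 1)) + (u z ^ 2 + v z ^ 2) * fderiv ℝ ρ z (0, 1)))) / (p z + β₂ + ρ z * (u z ^ 2 + v z ^ 2)) ^ 2)) +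
      (β₁ * (ρ z * u z * v z) / ((p z + β₂) * (p z + β₂ + ρ z * (u z ^ 2 + v z ^ 2))) * (β₃ * ρ z * (p z + β₂) / (p z + β₂ + ρ z * (u z ^ 2 + v z ^ 2)) * (((p z + β₂) * (β₁ * fderiv ℝ v z (1, 0)) - β₁ * v z * fderiv ℝ p z (1, 0)) / (p z + β₂) ^ 2) + β₁ * v z / (p z + β₂) * (((p z + β₂ + ρ z * (u z ^ 2 + v z ^ 2)) * (β₃ * ρ z * fderiv ℝ p z (1, 0) + (p z + β₂) * (β₃ * fderiv ℝ ρ z (1, 0))) - β₃ * ρ z * (p z + β₂) * (fderiv ℝ p z (1, 0) + (ρ z * (2 * u z * fderiv ℝ u z (1, 0) + 2 * v z * fderiv ℝ v z (1, 0)) + (u z ^ 2 + v z ^ 2) * fderiv ℝ ρ z (1, 0)))) / (p z + β₂ + ρ z * (u z ^ 2 + v z ^ 2)) ^ 2)) + β₁ * (p z + β₂ + ρ z * v z ^ 2) / ((p z + β₂) * (p z + β₂ + ρ z * (u z ^ 2 + v z ^ 2))) * (β₃ * ρ z * (p z + β₂) / (p z + β₂ + ρ z * (u z ^ 2 + v z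 ^ 2)) * (((p z + β₂) * (β₁ * fderiv ℝ v z (0, 1)) - β₁ * v z * fderiv ℝ p z (0, 1)) / (p z + β₂) ^ 2) + β₁ * v z / (p z + β₂) * (((p z + β₂ + ρ z * (u z ^ 2 + v z ^ 2)) * (β₃ * ρ z * fderiv ℝ p z (0, 1) + (p z + β₂) * (β₃ * fderiv ℝ ρ z (0, 1))) - β₃ * ρ z * (p z + β₂) * (fderiv ℝ p z (0, 1) + (ρ z * (2 * u z * fderiv ℝ u z (0, 1) + 2 * v z * fderiv ℝ v z (0, 1)) + (u z ^ 2 + v z ^ 2) * fderiv ℝ ρ z (0, 1)))) / (p z + β₂ + ρ z * (u z ^ 2 + v z ^ 2)) ^ 2))) =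
        β₁ ^ 2 * β₃ / ((p z + β₂) * (p z + β₂ + ρ z * (u z ^ 2 + v z ^ 2)) ^ 2) *
          ((p z + β₂) * (ρ z * fderiv ℝ u z (1, 0) + u z * fderiv ℝ ρ z (1, 0) + (ρ z * fderiv ℝ v z (0, 1) + v z * fderiv ℝ ρ z (0, 1))) - ρ z * u z * (ρ z * (u z * fderiv ℝ u z (1, 0) + v z * fderiv ℝ u z (0, 1)) + fderiv ℝ p z (1, 0)) - ρ z * v z * (ρ z * (u z * fderiv ℝ v z (1, 0) + v z * fderiv ℝ v z (0, 1)) + fderiv ℝ p z (0, 1))) := by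
      field_simp
      ring
    rw [hfac]
    linear_combination (β₁ ^ 2 * β₃ / ((p z + β₂) * (p z + β₂ + ρ z * (u z ^ 2 + v z ^ 2)) ^ 2) * (p z + β₂)) * e1 -
      (β₁ ^ 2 * β₃ / ((p z + β₂) * (p z + β₂ + ρ z * (u z ^ 2 + v z ^ 2)) ^ 2) * (ρ z * u z)) * e2 -
      (β₁ ^ 2 * β₃ / ((p z + β₂) * (p z + β₂ + ρ z * (u z ^ 2 + v z ^ 2)) ^ 2) * (ρ z * v z)) * e3
  · -- x-momentum equation
    simp only [pdx, pdy, hzΨ]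
    have h2x : fderiv ℝ (fun w => β₁ * u (Ψ w) / (p (Ψ w) + β₂)) (Φ z) (1, 0) =
        β₁ * (p z + β₂ + ρ z * u z ^ 2) / ((p z + β₂) * (p z + β₂ + ρ z * (u z ^ 2 + v z ^ 2))) * fderiv ℝ (fun y => β₁ * u y / (p y + β₂)) z (1, 0) +
        β₁ * (ρ z * u z * v z) / ((p z + β₂) * (p z + β₂ + ρ z * (u z ^ 2 + v z ^ 2))) * fderiv ℝ (fun y => β₁ * u y / (p y + β₂)) z (0, 1) :=
      keyx _ df1d
    have h2y : fderiv ℝ (fun w => β₁ * u (Ψ w) / (p (Ψ w) + β₂)) (Φ z) (0, 1) =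
        β₁ * (ρ z * u z * v z) / ((p z + β₂) * (p z + β₂ + ρ z * (u z ^ 2 + v z ^ 2))) * fderiv ℝ (fun y => β₁ * u y / (p y + β₂)) z (1, 0) +
        β₁ * (p z + β₂ + ρ z * v z ^ 2) / ((p z + β₂) * (p z + β₂ + ρ z * (u z ^ 2 + v z ^ 2))) * fderiv ℝ (fun y => β₁ * u y / (p y + β₂)) z (0, 1) :=
      keyy _ df1d
    have h3x : fderiv ℝ (fun w => β₄ - β₁ ^ 2 * β₃ / (p (Ψ w) + β₂)) (Φ z) (1, 0) =
        β₁ * (p z + β₂ + ρ z * u z ^ 2) / ((p z + β₂) * (p z + β₂ + ρ z * (u z ^ 2 + v z ^ 2))) * fderiv ℝ (fun y => β₄ - β₁ ^ 2 * β₃ / (p y + β₂)) z (1, 0) +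
        β₁ * (ρ z * u z * v z) / ((p z + β₂) * (p z + β₂ + ρ z * (u z ^ 2 + v z ^ 2))) * fderiv ℝ (fun y => β₄ - β₁ ^ 2 * β₃ / (p y + β₂)) z (0, 1) :=
      keyx _ df3d
    rw [h2x, h2y, h3x]
    simp only [hdf1, hdf3]
    have hfac : β₃ * ρ z * (p z + β₂) / (p z + β₂ + ρ z * (u z ^ 2 + v z ^ 2)) *
      (β₁ * u z / (p z + β₂) * (β₁ * (p z + β₂ + ρ z * u z ^ 2) / ((p z + β₂) * (p z + β₂ + ρ z * (u z ^ 2 + v z ^ 2))) * (((p z + β₂) * (β₁ * fderiv ℝ u z (1, 0)) - β₁ * u z * fderiv ℝ p z (1, 0)) / (p z + β₂) ^ 2) + β₁ * (ρ z * u z * v z) / ((p z + β₂) * (p z + β₂ + ρ z * (u z ^ 2 + v z ^ 2))) * (((p z + β₂) * (β₁ * fderiv ℝ u z (0, 1)) - β₁ * u z * fderiv ℝ p z (0, 1)) / (p z + β₂) ^ 2)) +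
       β₁ * v z / (p z + β₂) * (β₁ * (ρ z * u z * v z) / ((p z + β₂) * (p z + β₂ + ρ z * (u z ^ 2 + v z ^ 2))) * (((p z + β₂) * (β₁ * fderiv ℝ u z (1, 0)) - β₁ * u z * fderiv ℝ p z (1, 0)) / (p z + β₂) ^ 2) + β₁ * (p z + β₂ + ρ z * v z ^ 2) / ((p z + β₂) * (p z + β₂ + ρ z * (u z ^ 2 + v z ^ 2))) * (((p z + β₂) * (β₁ * fderiv ℝ u z (0, 1)) - β₁ * u z * fderiv ℝ p z (0, 1)) / (p z + β₂) ^ 2))) +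
      (β₁ * (p z + β₂ + ρ z * u z ^ 2) / ((p z + β₂) * (p z + β₂ + ρ z * (u z ^ 2 + v z ^ 2))) * (β₁ ^ 2 * β₃ * fderiv ℝ p z (1, 0) / (p z + β₂) ^ 2) + β₁ * (ρ z * u z * v z) / ((p z + β₂) * (p z + β₂ + ρ z * (u z ^ 2 + v z ^ 2))) * (β₁ ^ 2 * β₃ * fderiv ℝ p z (0, 1) / (p z + β₂) ^ 2)) =
        β₁ ^ 3 * β₃ / ((p z + β₂) ^ 2 * (p z + β₂ + ρ z * (u z ^ 2 + v z ^ 2))) * (ρ z * (u z * fderiv ℝ u z (1, 0) + v z * fderiv ℝ u z (0, 1)) + fderiv ℝ p z (1, 0)) := by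
      field_simp
      ring
    rw [hfac]
    linear_combination (β₁ ^ 3 * β₃ / ((p z + β₂) ^ 2 * (p z + β₂ + ρ z * (u z ^ 2 + v z ^ 2)))) * e2
  · -- y-momentum equation
    simp only [pdx, pdy, hzΨ]
    have h2x : fderiv ℝ (fun w => β₁ * v (Ψ w) / (p (Ψ w) + β₂)) (Φ z) (1, 0) =
        β₁ * (p z + β₂ + ρ z * u z ^ 2) / ((p z + β₂) * (p z + β₂ + ρ z * (u z ^ 2 + v z ^ 2))) * fderiv ℝ (fun y => β₁ * v y / (p y + β₂)) z (1, 0) +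
        β₁ * (ρ z * u z * v z) / ((p z + β₂) * (p z + β₂ + ρ z * (u z ^ 2 + v z ^ 2))) * fderiv ℝ (fun y => β₁ * v y / (p y + β₂)) z (0, 1) :=
      keyx _ df2d
    have h2y : fderiv ℝ (fun w => β₁ * v (Ψ w) / (p (Ψ w) + β₂)) (Φ z) (0, 1) =
        β₁ * (ρ z * u z * v z) / ((p z + β₂) * (p z + β₂ + ρ z * (u z ^ 2 + v z ^ 2))) * fderiv ℝ (fun y => β₁ * v y / (p y + β₂)) z (1, 0) +
        β₁ * (p z + β₂ + ρ z * v z ^ 2) / ((p z + β₂) * (p z + β₂ + ρ z * (u z ^ 2 + v z ^ 2))) * fderiv ℝ (fun y => β₁ * v y / (p y + β₂)) z (0, 1) :=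
      keyy _ df2d
    have h3y : fderiv ℝ (fun w => β₄ - β₁ ^ 2 * β₃ / (p (Ψ w) + β₂)) (Φ z) (0, 1) =
        β₁ * (ρ z * u z * v z) / ((p z + β₂) * (p z + β₂ + ρ z * (u z ^ 2 + v z ^ 2))) * fderiv ℝ (fun y => β₄ - β₁ ^ 2 * β₃ / (p y + β₂)) z (1, 0) +
        β₁ * (p z + β₂ + ρ z * v z ^ 2) / ((p z + β₂) * (p z + β₂ + ρ z * (u z ^ 2 + v z ^ 2))) * fderiv ℝ (fun y => β₄ - β₁ ^ 2 * β₃ / (p y + β₂)) z (0, 1) :=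
      keyy _ df3d
    rw [h2x, h2y, h3y]
    simp only [hdf2, hdf3]
    have hfac : β₃ * ρ z * (p z + β₂) / (p z + β₂ + ρ z * (u z ^ 2 + v z ^ 2)) *
      (β₁ * u z / (p z + β₂) * (β₁ * (p z + β₂ + ρ z * u z ^ 2) / ((p z + β₂) * (p z + β₂ + ρ z * (u z ^ 2 + v z ^ 2))) * (((p z + β₂) * (β₁ * fderiv ℝ v z (1, 0)) - β₁ * v z * fderiv ℝ p z (1, 0)) / (p z + β₂) ^ 2) + β₁ * (ρ z * u z * v z) / ((p z + β₂) * (p z + β₂ + ρ z * (u z ^ 2 + v z ^ 2))) * (((p z + β₂) * (β₁ * fderiv ℝ v z (0, 1)) - β₁ * v z * fderiv ℝ p z (0, 1)) / (p z + β₂) ^ 2)) +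
       β₁ * v z / (p z + β₂) * (β₁ * (ρ z * u z * v z) / ((p z + β₂) * (p z + β₂ + ρ z * (u z ^ 2 + v z ^ 2))) * (((p z + β₂) * (β₁ * fderiv ℝ v z (1, 0)) - β₁ * v z * fderiv ℝ p z (1, 0)) / (p z + β₂) ^ 2) + β₁ * (p z + β₂ + ρ z * v z ^ 2) / ((p z + β₂) * (p z + β₂ + ρ z * (u z ^ 2 + v z ^ 2))) * (((p z + β₂) * (β₁ * fderiv ℝ v z (0, 1)) - β₁ * v z * fderiv ℝ p z (0, 1)) / (p z + β₂) ^ 2))) +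
      (β₁ * (ρ z * u z * v z) / ((p z + β₂) * (p z + β₂ + ρ z * (u z ^ 2 + v z ^ 2))) * (β₁ ^ 2 * β₃ * fderiv ℝ p z (1, 0) / (p z + β₂) ^ 2) + β₁ * (p z + β₂ + ρ z * v z ^ 2) / ((p z + β₂) * (p z + β₂ + ρ z * (u z ^ 2 + v z ^ 2))) * (β₁ ^ 2 * β₃ * fderiv ℝ p z (0, 1) / (p z + β₂) ^ 2)) =
        β₁ ^ 3 * β₃ / ((p z + β₂) ^ 2 * (p z + β₂ + ρ z * (u z ^ 2 + v z ^ 2))) * (ρ z * (u z * fderiv ℝ v z (1, 0) + v z * fderiv ℝ v z (0, 1)) + fderiv ℝ p z (0, 1)) := by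
      field_simp
      ring
    rw [hfac]
    linear_combination (β₁ ^ 3 * β₃ / ((p z + β₂) ^ 2 * (p z + β₂ + ρ z * (u z ^ 2 + v z ^ 2)))) * e3
  · -- entropy equation
    simp only [pdx, pdy, hzΨ]
    have h4x : fderiv ℝ (fun w => F (S (Ψ w))) (Φ z) (1, 0) =
        β₁ * (p z + β₂ + ρ z * u z ^ 2) / ((p z + β₂) * (p z + β₂ + ρ z * (u z ^ 2 + v z ^ 2))) * fderiv ℝ (fun y => F (S y)) z (1, 0) +
        β₁ * (ρ z * u z * v z) / ((p z + β₂) * (p z + β₂ + ρ z * (u z ^ 2 + v z ^ 2))) * fderiv ℝ (fun y => F (S y)) z (0, 1) :=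
      keyx _ dFS
    have h4y : fderiv ℝ (fun w => F (S (Ψ w))) (Φ z) (0, 1) =
        β₁ * (ρ z * u z * v z) / ((p z + β₂) * (p z + β₂ + ρ z * (u z ^ 2 + v z ^ 2))) * fderiv ℝ (fun y => F (S y)) z (1, 0) +
        β₁ * (p z + β₂ + ρ z * v z ^ 2) / ((p z + β₂) * (p z + β₂ + ρ z * (u z ^ 2 + v z ^ 2))) * fderiv ℝ (fun y => F (S y)) z (0, 1) :=
      keyy _ dFS
    rw [h4x, h4y]
    simp only [hdFS]
    have hfac : β₁ * u z / (p z + β₂) * (β₁ * (p z + β₂ + ρ z * u z ^ 2) / ((p z + β₂) * (p z + β₂ + ρ z * (u z ^ 2 + v z ^ 2))) * (deriv F (S z) * fderiv ℝ S z (1, 0)) + β₁ * (ρ z * u z * v z) / ((p z + β₂) * (p z + β₂ + ρ z * (u z ^ 2 + v z ^ 2))) * (deriv F (S z) * fderiv ℝ S z (0, 1))) +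
      β₁ * v z / (p z + β₂) * (β₁ * (ρ z * u z * v z) / ((p z + β₂) * (p z + β₂ + ρ z * (u z ^ 2 + v z ^ 2))) * (deriv F (S z) * fderiv ℝ S z (1, 0)) + β₁ * (p z + β₂ + ρ z * v z ^ 2) / ((p z + β₂) * (p z + β₂ + ρ z * (u z ^ 2 + v z ^ 2))) * (deriv F (S z) * fderiv ℝ S z (0, 1))) =
        β₁ ^ 2 * deriv F (S z) / (p z + β₂) ^ 2 * (u z * fderiv ℝ S z (1, 0) + v z * fderiv ℝ S z (0, 1)) := by
      field_simp
      ring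
    rw [hfac]
    linear_combination (β₁ ^ 2 * deriv F (S z) / (p z + β₂) ^ 2) * e4
end

section
/- For ε ∈ ℝ and (ρ,u,v,p) ∈ ℝ⁴ with 1 + εp ≠ 0 and 1 + ε(p + ρ(u²+v²)) ≠ 0, define T_ε(ρ,u,v,p) = (ρ(1+εp)/(1+ε(p+ρ(u²+v²))), u/(1+εp), v/(1+εp), p/(1+εp)). Let ε₁, ε₂, ρ, u, v, p ∈ ℝ satisfy 1 + ε₁p ≠ 0, 1 + ε₁(p + ρ(u²+v²)) ≠ 0, 1 + (ε₁+ε₂)p ≠ 0, and 1 + (ε₁+ε₂)(p + ρ(u²+v²)) ≠ 0, and let (ρ₁,u₁,v₁,p₁) = T_{ε₁}(ρ,u,v,p). Then 1 + ε₂p₁ ≠ 0, 1 + ε₂(p₁ + ρ₁(u₁²+v₁²)) ≠ 0, and T_{ε₂}(ρ₁,u₁,v₁,p₁) = T_{ε₁+ε₂}(ρ,u,v,p); that is, the one-parameter family of reciprocal transformations is additive in the parameter ε. -/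
/-- The one-parameter reciprocal transformation acting on the dependent variables
`(ρ, u, v, p)` of the two-dimensional stationary gas dynamics equations. -/
noncomputable def recipT (ε ρ u v p : ℝ) : ℝ × ℝ × ℝ × ℝ :=
  (ρ * (1 + ε * p) / (1 + ε * (p + ρ * (u ^ 2 + v ^ 2))),
   u / (1 + ε * p), v / (1 + ε * p), p / (1 + ε * p))

/-- The one-parameter family of reciprocal transformations is additive in the parameter. -/
theorem recipT_additive (ε₁ ε₂ ρ u v p ρ₁ u₁ v₁ p₁ : ℝ)
    (h1 : 1 + ε₁ * p ≠ 0)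
    (h2 : 1 + ε₁ * (p + ρ * (u ^ 2 + v ^ 2)) ≠ 0)
    (h3 : 1 + (ε₁ + ε₂) * p ≠ 0)
    (h4 : 1 + (ε₁ + ε₂) * (p + ρ * (u ^ 2 + v ^ 2)) ≠ 0)
    (hT : (ρ₁, u₁, v₁, p₁) = recipT ε₁ ρ u v p) :
    1 + ε₂ * p₁ ≠ 0 ∧
    1 + ε₂ * (p₁ + ρ₁ * (u₁ ^ 2 + v₁ ^ 2)) ≠ 0 ∧
    recipT ε₂ ρ₁ u₁ v₁ p₁ = recipT (ε₁ + ε₂) ρ u v p := by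
  simp only [recipT, Prod.mk.injEq] at hT
  obtain ⟨hρ, hu, hv, hp⟩ := hT
  subst hρ hu hv hp
  have h1' : 1 + p * ε₁ ≠ 0 := by rwa [mul_comm]
  have h5 : 1 + ε₂ * (p / (1 + ε₁ * p))
      = (1 + (ε₁ + ε₂) * p) / (1 + ε₁ * p) := by
    field_simp; ring
  have h6 : 1 + ε₂ * (p / (1 + ε₁ * p) +
      ρ * (1 + ε₁ * p) / (1 + ε₁ * (p + ρ * (u ^ 2 + v ^ 2))) *
        ((u / (1 + ε₁ * p)) ^ 2 + (v / (1 + ε₁ * p)) ^ 2))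
      = (1 + (ε₁ + ε₂) * (p + ρ * (u ^ 2 + v ^ 2))) /
        (1 + ε₁ * (p + ρ * (u ^ 2 + v ^ 2))) := by
    field_simp; ring
  refine ⟨by rw [h5]; exact div_ne_zero h3 h1,
    by rw [h6]; exact div_ne_zero h4 h2, ?_⟩
  simp only [recipT, Prod.mk.injEq]
  refine ⟨?_, ?_, ?_, ?_⟩ <;>
  · rw [show (1 : ℝ) + ε₂ * (p / (1 + ε₁ * p)) = (1 + (ε₁ + ε₂) * p) / (1 + ε₁ * p) from h5]
    try rw [h6]
    field_simp
    try ring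
end

section
/- For ε ∈ ℝ and (ρ,u,v,p) ∈ ℝ⁴, define the 2×2 real matrix M_ε(ρ,u,v,p) with entries M₁₁ = 1 + ε(p+ρv²), M₁₂ = −ερuv, M₂₁ = −ερuv, M₂₂ = 1 + ε(p+ρu²), and for 1+εp ≠ 0 and 1+ε(p+ρ(u²+v²)) ≠ 0 define T_ε(ρ,u,v,p) = (ρ(1+εp)/(1+ε(p+ρ(u²+v²))), u/(1+εp), v/(1+εp), p/(1+εp)). Let ε₁, ε₂, ρ, u, v, p ∈ ℝ satisfy 1+ε₁p ≠ 0 and 1+ε₁(p+ρ(u²+v²)) ≠ 0, and let (ρ₁,u₁,v₁,p₁) = T_{ε₁}(ρ,u,v,p). Then M_{ε₂}(ρ₁,u₁,v₁,p₁) · M_{ε₁}(ρ,u,v,p) = M_{ε₁+ε₂}(ρ,u,v,p); that is, the coefficient matrices of the differential relations dx' = dx + ε[(p+ρv²)dx − ρuv dy], dy' = dy + ε[−ρuv dx + (p+ρu²)dy] compose additively in the parameter ε along the transformed fields. -/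
/-- The coefficient matrix of the differential relations of the one-parameter
reciprocal transformation of the two-dimensional stationary gas dynamics equations. -/
noncomputable def recipM (ε ρ u v p : ℝ) : Matrix (Fin 2) (Fin 2) ℝ :=
  !![1 + ε * (p + ρ * v ^ 2), -(ε * ρ * u * v);
     -(ε * ρ * u * v), 1 + ε * (p + ρ * u ^ 2)]

/-- The coefficient matrices of the differential relations compose additively in the
parameter `ε` along the transformed fields. -/
theorem recipM_additive (ε₁ ε₂ ρ u v p ρ₁ u₁ v₁ p₁ : ℝ)
    (h1 : 1 + ε₁ * p ≠ 0)
    (h2 : 1 + ε₁ * (p + ρ * (u ^ 2 + v ^ 2)) ≠ 0)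
    (hT : (ρ₁, u₁, v₁, p₁) = recipT ε₁ ρ u v p) :
    recipM ε₂ ρ₁ u₁ v₁ p₁ * recipM ε₁ ρ u v p = recipM (ε₁ + ε₂) ρ u v p := by
  simp only [recipT, Prod.mk.injEq] at hT
  obtain ⟨hr, hu, hv, hp⟩ := hT
  subst hr hu hv hp
  unfold recipM
  ext i j
  fin_cases i <;> fin_cases j <;>
    simp [Matrix.mul_apply, Fin.sum_univ_two] <;>
    field_simp <;> ring_nf <;> field_simp <;> ring
end

section
/- Let U ⊆ ℝ² be open, let ρ, u, v, p, S : U → ℝ be differentiable functions satisfying the two-dimensional stationary gas dynamics system on U, and let h : ℝ → ℝ be differentiable. Define ψ : U → ℝ by ψ = exp(h ∘ S), and set ρ' = ρψ⁻², u' = uψ, v' = vψ. Then the functions ρ', u', v', p, S satisfy the two-dimensional stationary gas dynamics system on U (the Munk–Prim transformation is an equivalence transformation). -/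
lemma pdx_mul {f g : ℝ × ℝ → ℝ} {z : ℝ × ℝ}
    (hf : DifferentiableAt ℝ f z) (hg : DifferentiableAt ℝ g z) :
    pdx (fun w => f w * g w) z = pdx f z * g z + f z * pdx g z := by
  unfold pdx
  rw [fderiv_fun_mul hf hg]
  simp only [ContinuousLinearMap.add_apply, ContinuousLinearMap.smul_apply, smul_eq_mul]
  ring

lemma pdy_mul {f g : ℝ × ℝ → ℝ} {z : ℝ × ℝ}
    (hf : DifferentiableAt ℝ f z) (hg : DifferentiableAt ℝ g z) :
    pdy (fun w => f w * g w) z = pdy f z * g z + f z * pdy g z := by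
  unfold pdy
  rw [fderiv_fun_mul hf hg]
  simp only [ContinuousLinearMap.add_apply, ContinuousLinearMap.smul_apply, smul_eq_mul]
  ring

lemma pdx_comp {E : ℝ → ℝ} {S : ℝ × ℝ → ℝ} {z : ℝ × ℝ}
    (hE : DifferentiableAt ℝ E (S z)) (hS : DifferentiableAt ℝ S z) :
    pdx (fun w => E (S w)) z = deriv E (S z) * pdx S z := by
  unfold pdx
  rw [show (fun w => E (S w)) = E ∘ S from rfl, fderiv_comp (x := z) hE hS]
  simp only [ContinuousLinearMap.coe_comp', Function.comp_apply]
  rw [show (fderiv ℝ S z) (1, 0) = ((fderiv ℝ S z) (1, 0)) • (1 : ℝ) by simp, map_smul]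
  simp [fderiv_apply_one_eq_deriv, mul_comm]

lemma pdy_comp {E : ℝ → ℝ} {S : ℝ × ℝ → ℝ} {z : ℝ × ℝ}
    (hE : DifferentiableAt ℝ E (S z)) (hS : DifferentiableAt ℝ S z) :
    pdy (fun w => E (S w)) z = deriv E (S z) * pdy S z := by
  unfold pdy
  rw [show (fun w => E (S w)) = E ∘ S from rfl, fderiv_comp (x := z) hE hS]
  simp only [ContinuousLinearMap.coe_comp', Function.comp_apply]
  rw [show (fderiv ℝ S z) (0, 1) = ((fderiv ℝ S z) (0, 1)) • (1 : ℝ) by simp, map_smul]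
  simp [fderiv_apply_one_eq_deriv, mul_comm]

/-- The Munk–Prim transformation is an equivalence transformation of the
two-dimensional stationary gas dynamics system. -/
theorem munk_prim_equivalence
    (U : Set (ℝ × ℝ)) (hU : IsOpen U) (ρ u v p S : ℝ × ℝ → ℝ)
    (hρ : ∀ z ∈ U, DifferentiableAt ℝ ρ z)
    (hu : ∀ z ∈ U, DifferentiableAt ℝ u z)
    (hv : ∀ z ∈ U, DifferentiableAt ℝ v z)
    (hp : ∀ z ∈ U, DifferentiableAt ℝ p z)
    (hS : ∀ z ∈ U, DifferentiableAt ℝ S z)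
    (hsys : GasSystem U ρ u v p S)
    (h : ℝ → ℝ) (hh : Differentiable ℝ h) :
    GasSystem U
      (fun z => ρ z * (Real.exp (h (S z)))⁻¹ ^ 2)
      (fun z => u z * Real.exp (h (S z)))
      (fun z => v z * Real.exp (h (S z)))
      p S := by
  intro z hz
  obtain ⟨c1, m1, m2, ent⟩ := hsys z hz
  have hρz := hρ z hz
  have huz := hu z hz
  have hvz := hv z hz
  have hSz := hS z hz
  -- derivatives of the one-variable functions
  have hhd : HasDerivAt h (deriv h (S z)) (S z) := (hh (S z)).hasDerivAt
  have hE2 : HasDerivAt (fun s => Real.exp (h s))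
      (Real.exp (h (S z)) * deriv h (S z)) (S z) := hhd.exp
  have hE1 : HasDerivAt (fun s => (Real.exp (h s))⁻¹ ^ 2)
      ((2 : ℕ) * ((Real.exp (h (S z)))⁻¹) ^ 1 *
        (-(Real.exp (h (S z)) * deriv h (S z)) / (Real.exp (h (S z))) ^ 2)) (S z) :=
    (hE2.inv (Real.exp_ne_zero _)).pow 2
  have hE2d : DifferentiableAt ℝ (fun s => Real.exp (h s)) (S z) := hE2.differentiableAt
  have hE1d : DifferentiableAt ℝ (fun s => (Real.exp (h s))⁻¹ ^ 2) (S z) := hE1.differentiableAt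
  have hψ : DifferentiableAt ℝ (fun w => Real.exp (h (S w))) z := hE2d.comp z hSz
  have hq : DifferentiableAt ℝ (fun w => (Real.exp (h (S w)))⁻¹ ^ 2) z := hE1d.comp z hSz
  -- pdx / pdy of ψ and q
  have pxψ : pdx (fun w => Real.exp (h (S w))) z
      = Real.exp (h (S z)) * deriv h (S z) * pdx S z := by
    rw [pdx_comp hE2d hSz, hE2.deriv]
  have pyψ : pdy (fun w => Real.exp (h (S w))) z
      = Real.exp (h (S z)) * deriv h (S z) * pdy S z := by
    rw [pdy_comp hE2d hSz, hE2.deriv]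
  have pxq : pdx (fun w => (Real.exp (h (S w)))⁻¹ ^ 2) z
      = ((2 : ℕ) * ((Real.exp (h (S z)))⁻¹) ^ 1 *
        (-(Real.exp (h (S z)) * deriv h (S z)) / (Real.exp (h (S z))) ^ 2)) * pdx S z := by
    rw [pdx_comp hE1d hSz, hE1.deriv]
  have pyq : pdy (fun w => (Real.exp (h (S w)))⁻¹ ^ 2) z
      = ((2 : ℕ) * ((Real.exp (h (S z)))⁻¹) ^ 1 *
        (-(Real.exp (h (S z)) * deriv h (S z)) / (Real.exp (h (S z))) ^ 2)) * pdy S z := by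
    rw [pdy_comp hE1d hSz, hE1.deriv]
  -- expanded continuity equation
  have c1' : (pdx ρ z * u z + ρ z * pdx u z) + (pdy ρ z * v z + ρ z * pdy v z) = 0 := by
    rw [← pdx_mul hρz huz, ← pdy_mul hρz hvz]; exact c1
  have he : Real.exp (h (S z)) ≠ 0 := Real.exp_ne_zero _
  refine ⟨?_, ?_, ?_, ?_⟩
  · rw [pdx_mul (hρz.fun_mul hq) (huz.fun_mul hψ), pdy_mul (hρz.fun_mul hq) (hvz.fun_mul hψ),
      pdx_mul hρz hq, pdx_mul huz hψ, pdy_mul hρz hq, pdy_mul hvz hψ,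
      pxψ, pyψ, pxq, pyq]
    field_simp
    linear_combination c1' -
      ρ z * deriv h (S z) * ent
  · rw [pdx_mul huz hψ, pdy_mul huz hψ, pxψ, pyψ]
    field_simp
    linear_combination m1 +
      ρ z * u z * deriv h (S z) * ent
  · rw [pdx_mul hvz hψ, pdy_mul hvz hψ, pxψ, pyψ]
    field_simp
    linear_combination m2 +
      ρ z * v z * deriv h (S z) * ent
  · linear_combination Real.exp (h (S z)) * ent
end

section
/- Let h, F : ℝ → ℝ be differentiable. On ℝ⁵ with coordinates (ρ, u, v, p, S), define the vector fields X_h(ρ,u,v,p,S) = (−2ρ h(S), u h(S), v h(S), 0, 0) and X_F(ρ,u,v,p,S) = (0, 0, 0, 0, F(S)). Then the Lie bracket satisfies [X_h, X_F] = −X_{h₁}, where h₁(S) = h'(S)F(S); that is, [X_h, X_F](ρ,u,v,p,S) = (2ρ h'(S)F(S), −u h'(S)F(S), −v h'(S)F(S), 0, 0) identically on ℝ⁵. -/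
/-- The Lie bracket of two vector fields on `ℝⁿ`:
`[V,W](z) = DW(z)·V(z) − DV(z)·W(z)`. -/
noncomputable def lieBr {n : ℕ} (V W : (Fin n → ℝ) → (Fin n → ℝ)) :
    (Fin n → ℝ) → (Fin n → ℝ) :=
  fun z => fderiv ℝ W z (V z) - fderiv ℝ V z (W z)

/-- Generator `X_h` of the Munk–Prim projective equivalence transformations,
with coordinates `(ρ, u, v, p, S)`. -/
def Xh (h : ℝ → ℝ) : (Fin 5 → ℝ) → (Fin 5 → ℝ) := fun z =>
  ![-2 * z 0 * h (z 4), z 1 * h (z 4), z 2 * h (z 4), 0, 0]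

/-- Generator `X_F` of the relabelings of the entropy. -/
def XF (F : ℝ → ℝ) : (Fin 5 → ℝ) → (Fin 5 → ℝ) := fun z =>
  ![0, 0, 0, 0, F (z 4)]

/-!
Write `X_h z = h (φ z) • A z` and `X_F z = F (φ z) • e`, where `φ` reads off the entropy `S`,
`A = diag(-2, 1, 1, 0, 0)` and `e = ∂_S`. Since `φ ∘ A = 0`, the field `X_F` is constant along
`X_h`, so `DX_F · X_h = 0`; since `A e = 0` and `φ e = 1`, `DX_h · X_F = h'(S) F(S) A z`, which is
`X_{h'F}`.
-/

section

variable {E G : Type*} [NormedAddCommGroup E] [NormedSpace ℝ E]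
  [NormedAddCommGroup G] [NormedSpace ℝ G]

theorem fderiv_apply_eq_zero_of_forall_add_smul {f : E → G} {z v : E}
    (hf : ∀ t : ℝ, f (z + t • v) = f z) : fderiv ℝ f z v = 0 := by
  by_cases hd : DifferentiableAt ℝ f z
  · rw [← hd.lineDeriv_eq_fderiv, lineDeriv]
    simp only [hf, deriv_const]
  · simp [fderiv_zero_of_not_differentiableAt hd]

theorem fderiv_smul_const_comp_apply_of_map_eq_zero (F : ℝ → ℝ) (φ : E →L[ℝ] ℝ) (e : G)
    {z v : E} (hv : φ v = 0) : fderiv ℝ (fun y => F (φ y) • e) z v = 0 :=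
  fderiv_apply_eq_zero_of_forall_add_smul fun t => by simp [hv]

theorem fderiv_comp_smul_linear_apply {h : ℝ → ℝ} {φ : E →L[ℝ] ℝ} {A : E →L[ℝ] G} {z : E}
    (hh : DifferentiableAt ℝ h (φ z)) (e : E) :
    fderiv ℝ (fun y => h (φ y) • A y) z e = (deriv h (φ z) * φ e) • A z + h (φ z) • A e := by
  have hV : HasFDerivAt (fun y => h (φ y) • A y) _ z :=
    (hh.hasDerivAt.comp_hasFDerivAt z φ.hasFDerivAt).smul A.hasFDerivAt
  rw [hV.fderiv]
  simp [add_comm]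

end

theorem lieBr_comp_smul_linear_comp_smul_const {n : ℕ} {h : ℝ → ℝ} (F : ℝ → ℝ)
    {φ : (Fin n → ℝ) →L[ℝ] ℝ} {A : (Fin n → ℝ) →L[ℝ] (Fin n → ℝ)} {e : Fin n → ℝ}
    (hφA : φ ∘L A = 0) (hAe : A e = 0) (hφe : φ e = 1) {z : Fin n → ℝ}
    (hh : DifferentiableAt ℝ h (φ z)) :
    lieBr (fun y => h (φ y) • A y) (fun y => F (φ y) • e) z
      = -(deriv h (φ z) * F (φ z)) • A z := by
  have hφAz : φ (A z) = 0 := by simpa using congrArg (· z) hφA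
  rw [lieBr, fderiv_smul_const_comp_apply_of_map_eq_zero _ _ _ (by simp [hφAz]),
    map_smul, fderiv_comp_smul_linear_apply hh, hAe, hφe]
  simp [smul_smul, mul_comm]

theorem bracket_Xh_XF_general (h F : ℝ → ℝ) (hh : Differentiable ℝ h) :
    lieBr (Xh h) (XF F) = fun z =>
      ![2 * z 0 * deriv h (z 4) * F (z 4),
        -(z 1 * deriv h (z 4) * F (z 4)),
        -(z 2 * deriv h (z 4) * F (z 4)), 0, 0] := by
  let S : (Fin 5 → ℝ) →L[ℝ] ℝ := .proj 4
  let A : (Fin 5 → ℝ) →L[ℝ] (Fin 5 → ℝ) := .pi fun i => ![-2, 1, 1, 0, 0] i • .proj i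
  have hXh : Xh h = fun z => h (S z) • A z := by
    funext z i; fin_cases i <;> simp [Xh, S, A] <;> ring
  have hXF : XF F = fun z => F (S z) • Pi.single 4 1 := by
    funext z i; fin_cases i <;> simp [XF, S]
  have hSA : S ∘L A = 0 := by ext; simp [S, A]
  have hAe : A (Pi.single 4 1) = 0 := by ext i; fin_cases i <;> simp [A]
  funext z
  rw [hXh, hXF, lieBr_comp_smul_linear_comp_smul_const F hSA hAe (by simp [S]) (hh _)]
  funext i; fin_cases i <;> simp [S, A] <;> ring

/-- The commutation relation `[X_h, X_F] = −X_{h₁}` with `h₁ = h′F`. -/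
theorem bracket_Xh_XF (h F : ℝ → ℝ) (hh : Differentiable ℝ h)
    (hF : Differentiable ℝ F) :
    lieBr (Xh h) (XF F) = fun z =>
      ![2 * z 0 * deriv h (z 4) * F (z 4),
        -(z 1 * deriv h (z 4) * F (z 4)),
        -(z 2 * deriv h (z 4) * F (z 4)), 0, 0] :=
  bracket_Xh_XF_general h F hh
end

section
/- Let A = (a_{ij})_{i,j ∈ {3,4,5}} be a 3×3 real matrix with det A ≠ 0 whose entries satisfy the nine relations: a₄₄a₃₃ − a₄₃a₃₄ − a₃₃ = 0, a₅₄a₃₃ − a₅₃a₃₄ − a₄₃ = 0, a₅₄a₄₃ − a₅₃a₄₄ − a₅₃ = 0, a₄₅a₃₃ − a₄₃a₃₅ − a₃₄ = 0, a₅₅a₃₃ − a₅₃a₃₅ − a₄₄ = 0, a₅₅a₄₃ − a₅₄ − a₅₃a₄₅ = 0, a₄₅a₃₄ − a₄₄a₃₅ − a₃₅ = 0, a₅₅a₃₄ − a₅₄a₃₅ − a₄₅ = 0, a₅₅a₄₄ − a₅₅ − a₅₄a₄₅ = 0. If a₃₅ = 0, then a₃₃ ≠ 0 and a₃₄ = 0,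 a₄₃ = a₅₄a₃₃, a₄₄ = 1, a₄₅ = 0, a₅₃ = (1/2)a₅₄²a₃₃, a₅₅ = a₃₃⁻¹. -/
/-!
With `a₃₅ = 0`, if also `a₃₃ = 0` the relations force the whole first row of `A` to vanish,
contradicting `det A ≠ 0`. Once `a₃₃ ≠ 0`, the relation `a₄₅ a₃₄ = 0` with `a₃₄ = a₄₅ a₃₃`
kills `a₄₅`, hence `a₃₄`, and every remaining entry is then read off from a single relation.
-/

section

variable {K : Type*} [Field K] {a₃₃ a₃₄ a₄₃ a₄₄ a₄₅ a₅₃ a₅₄ a₅₅ : K}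

theorem a₃₃_ne_zero_of_det_ne_zero
    (hdet : Matrix.det !![a₃₃, a₃₄, 0; a₄₃, a₄₄, a₄₅; a₅₃, a₅₄, a₅₅] ≠ 0)
    (h34 : a₃₄ = a₄₅ * a₃₃) (h45 : a₄₅ = a₅₅ * a₃₄) : a₃₃ ≠ 0 := by
  rintro rfl
  obtain rfl : a₃₄ = 0 := by simpa using h34
  exact hdet (Matrix.det_eq_zero_of_row_eq_zero 0 fun j => by fin_cases j <;> rfl)

theorem entries_of_a₃₅_eq_zero [NeZero (2 : K)] (h33 : a₃₃ ≠ 0)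
    (e1 : a₄₄ * a₃₃ - a₄₃ * a₃₄ = a₃₃) (e2 : a₄₃ = a₅₄ * a₃₃ - a₅₃ * a₃₄)
    (e3 : a₅₄ * a₄₃ = a₅₃ * (a₄₄ + 1)) (h34 : a₃₄ = a₄₅ * a₃₃) (e5 : a₅₅ * a₃₃ = a₄₄)
    (e7 : a₄₅ * a₃₄ = 0) :
    a₃₄ = 0 ∧ a₄₃ = a₅₄ * a₃₃ ∧ a₄₄ = 1 ∧ a₄₅ = 0 ∧
      a₅₃ = (1 / 2) * a₅₄ ^ 2 * a₃₃ ∧ a₅₅ = a₃₃⁻¹ := by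
  have h45 : a₄₅ = 0 := by
    have : a₄₅ ^ 2 * a₃₃ = 0 := by rw [← e7, h34]; ring
    simpa [h33] using this
  obtain rfl : a₃₄ = 0 := by rw [h34, h45, zero_mul]
  have h43 : a₄₃ = a₅₄ * a₃₃ := by simpa using e2
  have h44 : a₄₄ = 1 := mul_right_cancel₀ h33 (by simpa using e1)
  refine ⟨rfl, h43, h44, h45, ?_, eq_inv_of_mul_eq_one_left (e5.trans h44)⟩
  rw [h43, h44] at e3
  field_simp
  linear_combination -e3

end

theorem automorphism_case_a35_eq_zero_general
    (a₃₃ a₃₄ a₃₅ a₄₃ a₄₄ a₄₅ a₅₃ a₅₄ a₅₅ : ℝ)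
    (hdet : Matrix.det !![a₃₃, a₃₄, a₃₅; a₄₃, a₄₄, a₄₅; a₅₃, a₅₄, a₅₅] ≠ 0)
    (e1 : a₄₄ * a₃₃ - a₄₃ * a₃₄ - a₃₃ = 0)
    (e2 : a₅₄ * a₃₃ - a₅₃ * a₃₄ - a₄₃ = 0)
    (e3 : a₅₄ * a₄₃ - a₅₃ * a₄₄ - a₅₃ = 0)
    (e4 : a₄₅ * a₃₃ - a₄₃ * a₃₅ - a₃₄ = 0)
    (e5 : a₅₅ * a₃₃ - a₅₃ * a₃₅ - a₄₄ = 0)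
    (e7 : a₄₅ * a₃₄ - a₄₄ * a₃₅ - a₃₅ = 0)
    (e8 : a₅₅ * a₃₄ - a₅₄ * a₃₅ - a₄₅ = 0)
    (h35 : a₃₅ = 0) :
    a₃₃ ≠ 0 ∧ a₃₄ = 0 ∧ a₄₃ = a₅₄ * a₃₃ ∧ a₄₄ = 1 ∧ a₄₅ = 0 ∧
      a₅₃ = (1 / 2) * a₅₄ ^ 2 * a₃₃ ∧ a₅₅ = a₃₃⁻¹ := by
  subst h35
  have h34 : a₃₄ = a₄₅ * a₃₃ := by linear_combination -e4
  have h33 : a₃₃ ≠ 0 :=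
    a₃₃_ne_zero_of_det_ne_zero hdet h34 (by linear_combination -e8)
  exact ⟨h33, entries_of_a₃₅_eq_zero h33 (by linear_combination e1) (by linear_combination -e2)
    (by linear_combination e3) h34 (by linear_combination e5) (by linear_combination e7)⟩

/-- In the automorphism conditions for the Lie algebra `{X₃, X₄, X₅}`, the case
`a₃₅ = 0` forces the stated form of the matrix entries. -/
theorem automorphism_case_a35_eq_zero
    (a₃₃ a₃₄ a₃₅ a₄₃ a₄₄ a₄₅ a₅₃ a₅₄ a₅₅ : ℝ)
    (hdet : Matrix.det !![a₃₃, a₃₄, a₃₅; a₄₃, a₄₄, a₄₅; a₅₃, a₅₄, a₅₅] ≠ 0)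
    (e1 : a₄₄ * a₃₃ - a₄₃ * a₃₄ - a₃₃ = 0)
    (e2 : a₅₄ * a₃₃ - a₅₃ * a₃₄ - a₄₃ = 0)
    (e3 : a₅₄ * a₄₃ - a₅₃ * a₄₄ - a₅₃ = 0)
    (e4 : a₄₅ * a₃₃ - a₄₃ * a₃₅ - a₃₄ = 0)
    (e5 : a₅₅ * a₃₃ - a₅₃ * a₃₅ - a₄₄ = 0)
    (e6 : a₅₅ * a₄₃ - a₅₄ - a₅₃ * a₄₅ = 0)
    (e7 : a₄₅ * a₃₄ - a₄₄ * a₃₅ - a₃₅ = 0)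
    (e8 : a₅₅ * a₃₄ - a₅₄ * a₃₅ - a₄₅ = 0)
    (e9 : a₅₅ * a₄₄ - a₅₅ - a₅₄ * a₄₅ = 0)
    (h35 : a₃₅ = 0) :
    a₃₃ ≠ 0 ∧ a₃₄ = 0 ∧ a₄₃ = a₅₄ * a₃₃ ∧ a₄₄ = 1 ∧ a₄₅ = 0 ∧
      a₅₃ = (1 / 2) * a₅₄ ^ 2 * a₃₃ ∧ a₅₅ = a₃₃⁻¹ :=
  automorphism_case_a35_eq_zero_general a₃₃ a₃₄ a₃₅ a₄₃ a₄₄ a₄₅ a₅₃ a₅₄ a₅₅ hdet e1 e2 e3 e4 e5 e7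
    e8 h35
end

section
/- Let A = (a_{ij})_{i,j ∈ {3,4,5}} be a 3×3 real matrix whose entries satisfy the nine relations: a₄₄a₃₃ − a₄₃a₃₄ − a₃₃ = 0, a₅₄a₃₃ − a₅₃a₃₄ − a₄₃ = 0, a₅₄a₄₃ − a₅₃a₄₄ − a₅₃ = 0, a₄₅a₃₃ − a₄₃a₃₅ − a₃₄ = 0, a₅₅a₃₃ − a₅₃a₃₅ − a₄₄ = 0, a₅₅a₄₃ − a₅₄ − a₅₃a₄₅ = 0, a₄₅a₃₄ − a₄₄a₃₅ − a₃₅ = 0, a₅₅a₃₄ − a₅₄a₃₅ − a₄₅ = 0, a₅₅a₄₄ − a₅₅ − a₅₄a₄₅ = 0. If a₃₅ ≠ 0, then a₃₃ = a₃₄²/(2a₃₅), a₄₃ = a₃₄(a₄₅a₃₄ − 2a₃₅)/(2a₃₅²), a₄₄ = a₄₅a₃₄/a₃₅ − 1, a₅₃ = (a₄₅²a₃₄² − 4a₄₅a₃₅a₃₄ + 4a₃₅²)/(4a₃₅³), a₅₄ = a₄₅(a₄₅a₃₄ − 2a₃₅)/(2a₃₅²), a₅₅ = a₄₅²/(2a₃₅).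 -/
/-!
Each of the triples (e1, e4, e7) and (e9, e8, e7) forces a quadratic relation, `a₃₄² = 2 a₃₅ a₃₃`
and `a₄₅² = 2 a₃₅ a₅₅` respectively; given it, the triple is linear in the remaining entries and is
solved by dividing by `a₃₅`. The entry `a₅₃` then follows from e5.
-/

section Relations

variable {K : Type*}

/-- `y² - 2 x z` is half the Killing form of the algebra on `x X₃ + y X₄ + z X₅`. -/
theorem sq_eq_two_mul_mul_of_relations [CommRing K] {x y z u v w : K}
    (h₁ : v * x - u * y - x = 0) (h₂ : w * x - u * z - y = 0) (h₃ : w * y - v * z - z = 0) :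
    y ^ 2 = 2 * z * x := by
  linear_combination z * h₁ - y * h₂ + x * h₃

theorem eq_div_of_relations [Field K] [NeZero (2 : K)] {x y z u v w : K}
    (h₁ : v * x - u * y - x = 0) (h₂ : w * x - u * z - y = 0) (h₃ : w * y - v * z - z = 0)
    (hz : z ≠ 0) :
    x = y ^ 2 / (2 * z) ∧ u = y * (w * y - 2 * z) / (2 * z ^ 2) ∧ v = w * y / z - 1 := by
  have hsq := sq_eq_two_mul_mul_of_relations h₁ h₂ h₃
  refine ⟨?_, ?_, ?_⟩
  · field_simp
    linear_combination -hsq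
  · field_simp
    linear_combination -2 * z * h₂ - w * hsq
  · field_simp
    linear_combination -h₃

end Relations

theorem automorphism_case_a35_ne_zero_general
    (a₃₃ a₃₄ a₃₅ a₄₃ a₄₄ a₄₅ a₅₃ a₅₄ a₅₅ : ℝ)
    (e1 : a₄₄ * a₃₃ - a₄₃ * a₃₄ - a₃₃ = 0)
    (e4 : a₄₅ * a₃₃ - a₄₃ * a₃₅ - a₃₄ = 0)
    (e5 : a₅₅ * a₃₃ - a₅₃ * a₃₅ - a₄₄ = 0)
    (e7 : a₄₅ * a₃₄ - a₄₄ * a₃₅ - a₃₅ = 0)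
    (e8 : a₅₅ * a₃₄ - a₅₄ * a₃₅ - a₄₅ = 0)
    (e9 : a₅₅ * a₄₄ - a₅₅ - a₅₄ * a₄₅ = 0)
    (h35 : a₃₅ ≠ 0) :
    a₃₃ = a₃₄ ^ 2 / (2 * a₃₅) ∧
    a₄₃ = a₃₄ * (a₄₅ * a₃₄ - 2 * a₃₅) / (2 * a₃₅ ^ 2) ∧
    a₄₄ = a₄₅ * a₃₄ / a₃₅ - 1 ∧
    a₅₃ = (a₄₅ ^ 2 * a₃₄ ^ 2 - 4 * a₄₅ * a₃₅ * a₃₄ + 4 * a₃₅ ^ 2) / (4 * a₃₅ ^ 3) ∧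
    a₅₄ = a₄₅ * (a₄₅ * a₃₄ - 2 * a₃₅) / (2 * a₃₅ ^ 2) ∧
    a₅₅ = a₄₅ ^ 2 / (2 * a₃₅) := by
  obtain ⟨h33, h43, h44⟩ := eq_div_of_relations e1 e4 e7 h35
  obtain ⟨h55, h54, -⟩ := eq_div_of_relations (x := a₅₅) (y := a₄₅) (u := a₅₄) (v := a₄₄)
    (w := a₃₄) (by linear_combination e9) (by linear_combination e8) (by linear_combination e7) h35
  have h53 : a₅₃ = (a₅₅ * a₃₃ - a₄₄) / a₃₅ := by
    field_simp
    linear_combination -e5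
  refine ⟨h33, h43, h44, ?_, by rw [h54]; ring, h55⟩
  rw [h53, h55, h33, h44]
  field_simp
  ring

/-- In the automorphism conditions for the Lie algebra `{X₃, X₄, X₅}`, the case
`a₃₅ ≠ 0` forces the stated form of the matrix entries. -/
theorem automorphism_case_a35_ne_zero
    (a₃₃ a₃₄ a₃₅ a₄₃ a₄₄ a₄₅ a₅₃ a₅₄ a₅₅ : ℝ)
    (e1 : a₄₄ * a₃₃ - a₄₃ * a₃₄ - a₃₃ = 0)
    (e2 : a₅₄ * a₃₃ - a₅₃ * a₃₄ - a₄₃ = 0)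
    (e3 : a₅₄ * a₄₃ - a₅₃ * a₄₄ - a₅₃ = 0)
    (e4 : a₄₅ * a₃₃ - a₄₃ * a₃₅ - a₃₄ = 0)
    (e5 : a₅₅ * a₃₃ - a₅₃ * a₃₅ - a₄₄ = 0)
    (e6 : a₅₅ * a₄₃ - a₅₄ - a₅₃ * a₄₅ = 0)
    (e7 : a₄₅ * a₃₄ - a₄₄ * a₃₅ - a₃₅ = 0)
    (e8 : a₅₅ * a₃₄ - a₅₄ * a₃₅ - a₄₅ = 0)
    (e9 : a₅₅ * a₄₄ - a₅₅ - a₅₄ * a₄₅ = 0)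
    (h35 : a₃₅ ≠ 0) :
    a₃₃ = a₃₄ ^ 2 / (2 * a₃₅) ∧
    a₄₃ = a₃₄ * (a₄₅ * a₃₄ - 2 * a₃₅) / (2 * a₃₅ ^ 2) ∧
    a₄₄ = a₄₅ * a₃₄ / a₃₅ - 1 ∧
    a₅₃ = (a₄₅ ^ 2 * a₃₄ ^ 2 - 4 * a₄₅ * a₃₅ * a₃₄ + 4 * a₃₅ ^ 2) / (4 * a₃₅ ^ 3) ∧
    a₅₄ = a₄₅ * (a₄₅ * a₃₄ - 2 * a₃₅) / (2 * a₃₅ ^ 2) ∧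
    a₅₅ = a₄₅ ^ 2 / (2 * a₃₅) :=
  automorphism_case_a35_ne_zero_general a₃₃ a₃₄ a₃₅ a₄₃ a₄₄ a₄₅ a₅₃ a₅₄ a₅₅ e1 e4 e5 e7 e8 e9 h35
end
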